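/- arXiv:1901.03097 — 4 statements merged into one kernel-verified Lean document; each statement's English description precedes it below -/
import Mathlib

section
/- Let B : ℝ → ℝ be differentiable on [0,1], strictly positive on [0,1], with deriv B ≥ 0 on [0,1] and deriv B nonincreasing (antitone) on [0,1]. Then the function A(x) := (1−x)·B(x) is quasiconcave on the interval [0,1]. -/
/-!
`(1 - x) B x` is in fact concave: its derivative `(1 - x) B' x - B x` is antitone, because
`1 - x` and `B'` are nonnegative and antitone, and `B` is monotone since `B' ≥ 0`.
-/

open Set

lemma AntitoneOn.mul_of_nonneg {α M₀ : Type*} [Preorder α] [Mul M₀] [Zero M₀] [Preorder M₀]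
    [PosMulMono M₀] [MulPosMono M₀] {f g : α → M₀} {s : Set α}
    (hf : AntitoneOn f s) (hg : AntitoneOn g s)
    (hf₀ : ∀ x ∈ s, 0 ≤ f x) (hg₀ : ∀ x ∈ s, 0 ≤ g x) :
    AntitoneOn (fun x => f x * g x) s :=
  fun _ ha _ hb h ↦ mul_le_mul (hf ha hb h) (hg ha hb h) (hg₀ _ hb) (hf₀ _ ha)

lemma hasDerivAt_sub_mul {B : ℝ → ℝ} {c x : ℝ} (hB : DifferentiableAt ℝ B x) :
    HasDerivAt (fun y => (c - y) * B y) ((c - x) * deriv B x + -B x) x :=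
  (((hasDerivAt_id x).const_sub c).mul hB.hasDerivAt).congr_deriv (by simp only [id]; ring)

theorem concaveOn_sub_mul_of_deriv {s : Set ℝ} (hs : Convex ℝ s) {c : ℝ} (hsc : ∀ x ∈ s, x ≤ c)
    {B : ℝ → ℝ} (hB : ContinuousOn B s) (hB' : DifferentiableOn ℝ B (interior s))
    (hB'₀ : ∀ x ∈ interior s, 0 ≤ deriv B x) (hB'_anti : AntitoneOn (deriv B) (interior s)) :
    ConcaveOn ℝ s fun x => (c - x) * B x := by
  have hBx : ∀ x ∈ interior s, DifferentiableAt ℝ B x := fun x hx =>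
    hB'.differentiableAt (isOpen_interior.mem_nhds hx)
  have hB_mono : MonotoneOn B s := monotoneOn_of_deriv_nonneg hs hB hB' hB'₀
  have hc_sub : ∀ x ∈ interior s, 0 ≤ c - x := fun x hx =>
    sub_nonneg.2 (hsc x (interior_subset hx))
  have hderiv : EqOn (fun x => (c - x) * deriv B x + -B x) (deriv fun x => (c - x) * B x)
      (interior s) := fun x hx => (hasDerivAt_sub_mul (hBx x hx)).deriv.symm
  have hc_sub_anti : AntitoneOn (fun x => c - x) (interior s) :=
    fun _ _ _ _ h => sub_le_sub_left h c
  have hderiv_anti : AntitoneOn (fun x => (c - x) * deriv B x + -B x) (interior s) :=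
    (hc_sub_anti.mul_of_nonneg hB'_anti hc_sub hB'₀).add (hB_mono.mono interior_subset).neg
  exact (hderiv_anti.congr hderiv).concaveOn_of_deriv hs
    ((continuousOn_const.sub continuousOn_id).mul hB)
    (fun x hx => (hasDerivAt_sub_mul (hBx x hx)).differentiableAt.differentiableWithinAt)

theorem quasiconcave_one_sub_mul_general
    (B : ℝ → ℝ)
    (hdiff : DifferentiableOn ℝ B (Set.Icc 0 1))
    (hderiv_nonneg : ∀ x ∈ Set.Icc (0:ℝ) 1, 0 ≤ deriv B x)
    (hderiv_anti : AntitoneOn (deriv B) (Set.Icc 0 1)) :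
    QuasiconcaveOn ℝ (Set.Icc (0:ℝ) 1) (fun x => (1 - x) * B x) :=
  (concaveOn_sub_mul_of_deriv (convex_Icc 0 1) (fun _ hx => hx.2) hdiff.continuousOn
    (hdiff.mono interior_subset) (fun x hx => hderiv_nonneg x (interior_subset hx))
    (hderiv_anti.mono interior_subset)).quasiconcaveOn

/-- Lemma 1: for a differentiable, strictly positive function `B` on `[0,1]` with
nonnegative and nonincreasing derivative on `[0,1]`, the function
`A x = (1 - x) * B x` is quasiconcave on `[0,1]`. -/
theorem quasiconcave_one_sub_mul
    (B : ℝ → ℝ)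
    (hdiff : DifferentiableOn ℝ B (Set.Icc 0 1))
    (hpos : ∀ x ∈ Set.Icc (0:ℝ) 1, 0 < B x)
    (hderiv_nonneg : ∀ x ∈ Set.Icc (0:ℝ) 1, 0 ≤ deriv B x)
    (hderiv_anti : AntitoneOn (deriv B) (Set.Icc 0 1)) :
    QuasiconcaveOn ℝ (Set.Icc (0:ℝ) 1) (fun x => (1 - x) * B x) :=
  quasiconcave_one_sub_mul_general B hdiff hderiv_nonneg hderiv_anti
end

section
/- Let τ > 0, c > 0 and a₁, a₂, a₃ ≥ 0 be real numbers. Then the function f(t) := (τ−t)·(a₁·t/(t+c) + a₂·√(t/(t+c)) + a₃) is concave on the interval [0, τ]. -/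
/-!
The factor `τ - t` is affine, nonnegative and decreasing on `[0, τ]`, while the
gain `a₁ u + a₂ √u + a₃` with `u t = t / (t + c)` is concave, nonnegative and increasing: `u` is
concave and increasing, and `√` is concave and increasing. A product of two nonnegative concave
functions that vary in opposite directions is concave.
-/

open Set

theorem ConcaveOn.sqrt {s : Set ℝ} {f : ℝ → ℝ} (hf : ConcaveOn ℝ s f)
    (hf₀ : ∀ ⦃x⦄, x ∈ s → 0 ≤ f x) : ConcaveOn ℝ s (fun x => √(f x)) := by
  refine ⟨hf.1, fun x hx y hy a b ha hb hab => ?_⟩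
  calc a • √(f x) + b • √(f y) ≤ √(a • f x + b • f y) :=
        Real.strictConcaveOn_sqrt.concaveOn.2 (hf₀ hx) (hf₀ hy) ha hb hab
    _ ≤ √(f (a • x + b • y)) := Real.sqrt_le_sqrt (hf.2 hx hy ha hb hab)

theorem ConcaveOn.const_sub_mul {s : Set ℝ} {g : ℝ → ℝ} {τ : ℝ} (hs : s ⊆ Iic τ)
    (hg : ConcaveOn ℝ s g) (hg_mono : MonotoneOn g s) (hg₀ : ∀ ⦃x⦄, x ∈ s → 0 ≤ g x) :
    ConcaveOn ℝ s (fun t => (τ - t) * g t) := by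
  have hlin : ConcaveOn ℝ s (fun t => τ - t) := (concaveOn_const τ hg.1).sub (convexOn_id hg.1)
  have hanti : AntitoneOn (fun t => τ - t) s := fun x _ y _ hxy => by simp only; linarith
  exact hlin.mul hg (fun t ht => sub_nonneg.2 (hs ht)) hg₀ (hanti.antivaryOn hg_mono)

section SaturatingRatio

variable {c : ℝ}

theorem concaveOn_div_add_const (hc : 0 < c) : ConcaveOn ℝ (Ici 0) (fun t => t / (t + c)) := by
  refine ⟨convex_Ici 0, fun x (hx : 0 ≤ x) y (hy : 0 ≤ y) a b ha hb hab => ?_⟩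
  obtain rfl : b = 1 - a := by linarith
  simp only [smul_eq_mul]
  rw [mul_div_assoc', mul_div_assoc', div_add_div _ _ (by positivity) (by positivity),
    div_le_div_iff₀ (by positivity) (by positivity)]
  nlinarith [mul_nonneg (mul_nonneg (mul_nonneg hc.le ha) hb) (sq_nonneg (x - y))]

theorem monotoneOn_div_add_const (hc : 0 < c) : MonotoneOn (fun t => t / (t + c)) (Ici 0) := by
  intro x (hx : 0 ≤ x) y (hy : 0 ≤ y) hxy
  rw [div_le_div_iff₀ (by positivity) (by positivity)]
  nlinarith

end SaturatingRatio

theorem concaveOn_snr_approx_general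
    (τ c a₁ a₂ a₃ : ℝ) (hc : 0 < c)
    (ha₁ : 0 ≤ a₁) (ha₂ : 0 ≤ a₂) (ha₃ : 0 ≤ a₃) :
    ConcaveOn ℝ (Set.Icc 0 τ)
      (fun t => (τ - t) * (a₁ * (t / (t + c)) + a₂ * Real.sqrt (t / (t + c)) + a₃)) := by
  have hu_nonneg : ∀ ⦃t : ℝ⦄, t ∈ Ici 0 → 0 ≤ t / (t + c) := fun t (ht : 0 ≤ t) => by positivity
  have hgain : ConcaveOn ℝ (Ici 0)
      (fun t => a₁ * (t / (t + c)) + a₂ * √(t / (t + c)) + a₃) :=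
    (((concaveOn_div_add_const hc).smul ha₁).add
      (((concaveOn_div_add_const hc).sqrt hu_nonneg).smul ha₂)).add_const a₃
  have hgain_mono : MonotoneOn
      (fun t => a₁ * (t / (t + c)) + a₂ * √(t / (t + c)) + a₃) (Ici 0) := by
    intro x hx y hy hxy
    have hu : x / (x + c) ≤ y / (y + c) := monotoneOn_div_add_const hc hx hy hxy
    dsimp only
    gcongr
  refine ConcaveOn.const_sub_mul (fun t ht => ht.2)
    (hgain.subset Icc_subset_Ici_self (convex_Icc 0 τ))
    (hgain_mono.mono Icc_subset_Ici_self) fun t ht => ?_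
  have := ht.1
  positivity

/-- The approximate average backscattered SNR
`f t = (τ - t) * (a₁ * t/(t+c) + a₂ * √(t/(t+c)) + a₃)`
is concave in the channel-estimation time allocation `t ∈ [0, τ]`. -/
theorem concaveOn_snr_approx
    (τ c a₁ a₂ a₃ : ℝ) (hτ : 0 < τ) (hc : 0 < c)
    (ha₁ : 0 ≤ a₁) (ha₂ : 0 ≤ a₂) (ha₃ : 0 ≤ a₃) :
    ConcaveOn ℝ (Set.Icc 0 τ)
      (fun t => (τ - t) * (a₁ * (t / (t + c)) + a₂ * Real.sqrt (t / (t + c)) + a₃)) :=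
  concaveOn_snr_approx_general τ c a₁ a₂ a₃ hc ha₁ ha₂ ha₃
end

section
/- Given real numbers β > 0, c > 0 and a natural number N ≥ 2, define g : ℝ → ℝ by g(K) = (N−1)(N−2)β²/(β²+cK) + 4(N−1)β/√(β²+cK) + 2. Then for every K ∈ [1, N], g(K) ≤ max(g(1), g(N)). -/
/-- Since the approximate SNR is convex in the integer-relaxed pilot count `K`,
its maximum over `K ∈ [1, N]` is attained at a corner point `K = 1` or `K = N`. -/
theorem snr_pilot_count_max_at_corner
    (β c : ℝ) (hβ : 0 < β) (hc : 0 < c) (N : ℕ) (hN : 2 ≤ N)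
    (g : ℝ → ℝ)
    (hg : g = fun K : ℝ =>
        ((N : ℝ) - 1) * ((N : ℝ) - 2) * β ^ 2 / (β ^ 2 + c * K)
          + 4 * ((N : ℝ) - 1) * β / Real.sqrt (β ^ 2 + c * K) + 2) :
    ∀ K ∈ Set.Icc (1 : ℝ) (N : ℝ), g K ≤ max (g 1) (g N) := by
  intro K hK
  obtain ⟨hK1, hKN⟩ := hK
  have hN2 : (2 : ℝ) ≤ (N : ℝ) := by exact_mod_cast hN
  have hle : β ^ 2 + c * 1 ≤ β ^ 2 + c * K := by nlinarith
  have hpos1 : (0 : ℝ) < β ^ 2 + c * 1 := by nlinarith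
  have hposK : (0 : ℝ) < β ^ 2 + c * K := lt_of_lt_of_le hpos1 hle
  have hsqrt : Real.sqrt (β ^ 2 + c * 1) ≤ Real.sqrt (β ^ 2 + c * K) :=
    Real.sqrt_le_sqrt hle
  have hsqrtpos : (0 : ℝ) < Real.sqrt (β ^ 2 + c * 1) := Real.sqrt_pos.mpr hpos1
  have hnum1 : (0 : ℝ) ≤ ((N : ℝ) - 1) * ((N : ℝ) - 2) * β ^ 2 :=
    mul_nonneg (mul_nonneg (by linarith) (by linarith)) (sq_nonneg β)
  have hnum2 : (0 : ℝ) ≤ 4 * ((N : ℝ) - 1) * β := by nlinarith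
  have h1 : ((N : ℝ) - 1) * ((N : ℝ) - 2) * β ^ 2 / (β ^ 2 + c * K)
      ≤ ((N : ℝ) - 1) * ((N : ℝ) - 2) * β ^ 2 / (β ^ 2 + c * 1) :=
    by gcongr
  have h2 : 4 * ((N : ℝ) - 1) * β / Real.sqrt (β ^ 2 + c * K)
      ≤ 4 * ((N : ℝ) - 1) * β / Real.sqrt (β ^ 2 + c * 1) :=
    by gcongr
  have : g K ≤ g 1 := by
    subst hg
    simp only
    linarith
  exact le_trans this (le_max_left _ _)
end

section
/- Let M be an N×N complex matrix, h ∈ ℂᴺ, and 1 ≤ K ≤ N. Let P be the real diagonal N×N matrix whose first K diagonal entries are 1 and whose remaining entries are 0, and set D := ‖Ph‖²·I_N + ‖h‖²·P (a real diagonal matrix, where ‖Ph‖² = Σ_{i≤K}|hᵢ|² and ‖h‖² = Σᵢ|hᵢ|²). Then the complex equation M·h = (h*·hᴴ·P + P·h*·hᴴ)·h holds if and only if the real equation Φ{M}·z_h = [[D, 0], [0, D]]·z_h holds. -/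
open Matrix

/-- The real `2n×2n` block matrix `Φ{M} = [[Re M, -Im M], [-Im M, -Re M]]`. -/
def PhiMap {n : ℕ} (M : Matrix (Fin n) (Fin n) ℂ) :
    Matrix (Fin n ⊕ Fin n) (Fin n ⊕ Fin n) ℝ :=
  Matrix.fromBlocks (M.map Complex.re) (-(M.map Complex.im))
    (-(M.map Complex.im)) (-(M.map Complex.re))

/-- The realification `z_h = (Re h; Im h)` of a complex vector `h`. -/
def realify {n : ℕ} (h : Fin n → ℂ) : Fin n ⊕ Fin n → ℝ :=
  Sum.elim (fun i => (h i).re) (fun i => (h i).im)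

/-!
Both sides collapse to conjugates and realifications. Since `hᴴ P h = ‖Ph‖²` and `hᴴ h = ‖h‖²`,
the right-hand side `(h* hᴴ P + P h* hᴴ) h` equals `(D h)*`, while `Φ{M} z_h = z_{(M h)*}` and
`[[D, 0], [0, D]] z_h = z_{D h}` for real `D`. As `h ↦ z_h` is injective and conjugation is an
involution, both equations say `(M h)* = D h`.
-/

theorem PhiMap_mulVec_realify {n : ℕ} (M : Matrix (Fin n) (Fin n) ℂ) (h : Fin n → ℂ) :
    PhiMap M *ᵥ realify h = realify (star (M *ᵥ h)) := by
  rw [PhiMap, fromBlocks_mulVec]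
  ext (i | i) <;>
    simp only [realify, Pi.add_apply, Sum.elim_inl, Sum.elim_inr, Function.comp_def, mulVec,
      dotProduct, map_apply, Matrix.neg_apply, ← Finset.sum_add_distrib, Pi.star_apply,
      Complex.star_def, Complex.conj_re, Complex.conj_im, Complex.re_sum, Complex.im_sum,
      ← Finset.sum_neg_distrib]
  · exact Finset.sum_congr rfl fun j _ => by rw [Complex.mul_re]; ring
  · exact Finset.sum_congr rfl fun j _ => by rw [Complex.mul_im]; ring

theorem fromBlocks_mulVec_realify {n : ℕ} (D : Matrix (Fin n) (Fin n) ℝ) (h : Fin n → ℂ) :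
    fromBlocks D 0 0 D *ᵥ realify h = realify (D.map (↑) *ᵥ h) := by
  ext (i | i) <;>
    simp [realify, mulVec, dotProduct, Complex.re_sum, Complex.im_sum]

theorem realify_injective {n : ℕ} : Function.Injective (realify (n := n)) := by
  intro h g hhg
  funext i
  apply Complex.ext
  · exact congrFun hhg (Sum.inl i)
  · exact congrFun hhg (Sum.inr i)

theorem vecMulVec_mul_diagonal_add_diagonal_mul_vecMulVec_mulVec {n R : Type*} [Fintype n]
    [DecidableEq n] [CommSemiring R] (u v w p : n → R) :
    (vecMulVec u v * diagonal p + diagonal p * vecMulVec u v) *ᵥ w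
      = (v ⬝ᵥ (p * w)) • u + (v ⬝ᵥ w) • (p * u) := by
  have hdiag : ∀ x : n → R, diagonal p *ᵥ x = p * x := fun x => funext (mulVec_diagonal p x)
  ext i
  simp [add_mulVec, ← mulVec_mulVec, vecMulVec_mulVec, hdiag]

theorem star_dotProduct_mul_eq_sum_mul_normSq {n : Type*} [Fintype n] (p h : n → ℂ) :
    star h ⬝ᵥ (p * h) = ∑ j, p j * Complex.normSq (h j) := by
  simp only [dotProduct, Pi.star_apply, Pi.mul_apply, Complex.star_def,
    Complex.normSq_eq_conj_mul_self]
  exact Finset.sum_congr rfl fun j _ => by ring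

theorem star_dotProduct_self_eq_sum_normSq {n : Type*} [Fintype n] (h : n → ℂ) :
    star h ⬝ᵥ h = ∑ j, (Complex.normSq (h j) : ℂ) := by
  simpa using star_dotProduct_mul_eq_sum_mul_normSq 1 h

theorem complex_critical_point_iff_real_general
    {N : ℕ} (M : Matrix (Fin N) (Fin N) ℂ) (h : Fin N → ℂ)
    (K : ℕ)
    (P : Matrix (Fin N) (Fin N) ℂ)
    (hP : P = Matrix.diagonal (fun i : Fin N => if (i : ℕ) < K then 1 else 0))
    (A : Matrix (Fin N) (Fin N) ℂ)
    (hA : A = Matrix.of (fun i j : Fin N =>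
      (starRingEnd ℂ) (h i) * (starRingEnd ℂ) (h j)))
    (D : Matrix (Fin N) (Fin N) ℝ)
    (hD : D = Matrix.diagonal (fun i : Fin N =>
      (∑ l : Fin N, if (l : ℕ) < K then Complex.normSq (h l) else 0)
        + if (i : ℕ) < K then (∑ l : Fin N, Complex.normSq (h l)) else 0)) :
    M.mulVec h = (A * P + P * A).mulVec h ↔
      (PhiMap M).mulVec (realify h)
        = (Matrix.fromBlocks D 0 0 D).mulVec (realify h) := by
  have hrhs : (A * P + P * A) *ᵥ h = star (D.map (↑) *ᵥ h) := by
    have hA' : A = vecMulVec (star h) (star h) := hA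
    rw [hA', hP, vecMulVec_mul_diagonal_add_diagonal_mul_vecMulVec_mulVec, hD,
      diagonal_map Complex.ofReal_zero, star_dotProduct_mul_eq_sum_mul_normSq,
      star_dotProduct_self_eq_sum_normSq]
    ext i
    simp only [Pi.add_apply, Pi.smul_apply, Pi.mul_apply, Pi.star_apply, smul_eq_mul,
      mulVec_diagonal, Complex.star_def, map_mul, Complex.conj_ofReal]
    push_cast [ite_mul, one_mul, zero_mul, apply_ite ((↑) : ℝ → ℂ)]
    split_ifs <;> ring
  rw [PhiMap_mulVec_realify, fromBlocks_mulVec_realify, realify_injective.eq_iff, hrhs,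
    eq_star_iff_eq_star, eq_comm]

/-- Equivalence between the complex critical-point system (eq. (15)) and its
real-domain form (eq. (16)): with `P = E_K E_Kᵀ` the diagonal 0/1 projection
matrix onto the first `K` coordinates and
`D = ‖Ph‖² I_N + ‖h‖² P`, the complex equation
`M h = (h* hᴴ P + P h* hᴴ) h` holds iff `Φ{M} z_h = [[D,0],[0,D]] z_h`. -/
theorem complex_critical_point_iff_real
    {N : ℕ} (M : Matrix (Fin N) (Fin N) ℂ) (h : Fin N → ℂ)
    (K : ℕ) (hK1 : 1 ≤ K) (hKN : K ≤ N)
    (P : Matrix (Fin N) (Fin N) ℂ)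
    (hP : P = Matrix.diagonal (fun i : Fin N => if (i : ℕ) < K then 1 else 0))
    (A : Matrix (Fin N) (Fin N) ℂ)
    (hA : A = Matrix.of (fun i j : Fin N =>
      (starRingEnd ℂ) (h i) * (starRingEnd ℂ) (h j)))
    (D : Matrix (Fin N) (Fin N) ℝ)
    (hD : D = Matrix.diagonal (fun i : Fin N =>
      (∑ l : Fin N, if (l : ℕ) < K then Complex.normSq (h l) else 0)
        + if (i : ℕ) < K then (∑ l : Fin N, Complex.normSq (h l)) else 0)) :
    M.mulVec h = (A * P + P * A).mulVec h ↔
      (PhiMap M).mulVec (realify h)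
        = (Matrix.fromBlocks D 0 0 D).mulVec (realify h) :=
  complex_critical_point_iff_real_general M h K P hP A hA D hD
end
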